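/- For M(ρ) = (ρ − α)(β − ρ) with α < β: if ρ̂ ≤ α − C₂ with C₂ = ((β−α)/(2ζ D_ρ)) ∑_j (D_{m_j} m̂_j)², then L(ρ) = D_ρ(ρ − ρ̂) − (ζ(α + β − 2ρ)/2) ∑_j (D_{m_j} m̂_j/(D_{m_j} M(ρ) + ζ))² satisfies L(ρ) > 0 for all ρ ∈ (α, ρ_m], where ρ_m = (α+β)/2; hence L has no root in (α, β) and the bounded minimizer of the proximal subproblem is ρ* = α. Symmetrically, if ρ̂ ≥ β + C₂ then ρ* = β. -/
import Mathlib


open Classical in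
noncomputable def phiAction {d : ℕ} (M : ℝ → ℝ) (ρ : ℝ) (m : EuclideanSpace ℝ (Fin d)) : EReal :=
  if 0 < M ρ then ((‖m‖ ^ 2 / M ρ : ℝ) : EReal)
  else if M ρ = 0 ∧ m = 0 then 0 else ⊤

noncomputable def proxObj {d : ℕ} (M : ℝ → ℝ) (Dρ ζ : ℝ) (Dm : Fin d → ℝ)
    (ρhat : ℝ) (mhat : EuclideanSpace ℝ (Fin d))
    (p : ℝ × EuclideanSpace ℝ (Fin d)) : EReal :=
  ((1 / 2 * Dρ * (p.1 - ρhat) ^ 2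
      + 1 / 2 * ∑ j, Dm j * (p.2 j - mhat j) ^ 2 : ℝ) : EReal)
    + ((ζ / 2 : ℝ) : EReal) * phiAction M p.1 p.2

lemma coord_key (Dm ζ M mh m : ℝ) (hDm : 0 < Dm) (hζ : 0 < ζ) (hM : 0 < M) :
    Dm * mh ^ 2 - M / ζ * (Dm * mh) ^ 2 ≤ Dm * (m - mh) ^ 2 + ζ / M * m ^ 2 := by
  rw [← sub_nonneg]
  have h : (Dm * (m - mh) ^ 2 + ζ / M * m ^ 2) - (Dm * mh ^ 2 - M / ζ * (Dm * mh) ^ 2)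
      = ((ζ * M * Dm + ζ ^ 2) * m ^ 2 - 2 * (ζ * M * Dm) * mh * m
          + M ^ 2 * Dm ^ 2 * mh ^ 2) / (ζ * M) := by
    field_simp; ring
  rw [h]
  apply div_nonneg _ (le_of_lt (mul_pos hζ hM))
  nlinarith [sq_nonneg ((ζ * M * Dm + ζ ^ 2) * m - ζ * M * Dm * mh),
    mul_pos (mul_pos hζ hM) hDm, sq_nonneg mh,
    mul_nonneg (mul_nonneg (mul_nonneg hζ.le (pow_pos hM 3).le) (pow_pos hDm 3).le) (sq_nonneg mh)]

lemma prox_min_at {d : ℕ} (α β : ℝ) (hαβ : α < β) (Dρ ζ : ℝ) (Dm : Fin d → ℝ)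
    (hζ : 0 < ζ) (hDm : ∀ j, 0 < Dm j)
    (ρhat : ℝ) (mhat : EuclideanSpace ℝ (Fin d)) (c : ℝ) (hc : (c - α) * (β - c) = 0)
    (hkey : ∀ ρ, α ≤ ρ → ρ ≤ β →
      Dρ * (c - ρhat) ^ 2 + (ρ - α) * (β - ρ) / ζ * (∑ j, (Dm j * mhat j) ^ 2)
        ≤ Dρ * (ρ - ρhat) ^ 2) :
    ∀ q, proxObj (fun ρ => (ρ - α) * (β - ρ)) Dρ ζ Dm ρhat mhat
          (c, (0 : EuclideanSpace ℝ (Fin d)))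
        ≤ proxObj (fun ρ => (ρ - α) * (β - ρ)) Dρ ζ Dm ρhat mhat q := by
  intro q
  obtain ⟨ρ, m⟩ := q
  have hLHS : proxObj (fun ρ => (ρ - α) * (β - ρ)) Dρ ζ Dm ρhat mhat
      (c, (0 : EuclideanSpace ℝ (Fin d)))
      = (((1 / 2 * Dρ * (c - ρhat) ^ 2 + 1 / 2 * ∑ j, Dm j * ((0:ℝ) - mhat j) ^ 2 : ℝ)) : EReal) := by
    simp [proxObj, phiAction, hc]
  rw [hLHS]
  by_cases hpos : 0 < (ρ - α) * (β - ρ)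
  · have hαρ : α < ρ ∧ ρ < β := by
      rcases mul_pos_iff.1 hpos with ⟨h1, h2⟩ | ⟨h1, h2⟩
      · constructor <;> linarith
      · constructor <;> linarith
    have hnorm : ‖m‖ ^ 2 = ∑ j, (m j) ^ 2 := by
      rw [EuclideanSpace.norm_eq, Real.sq_sqrt (by positivity)]
      simp [sq_abs]
    have hRHS : proxObj (fun ρ => (ρ - α) * (β - ρ)) Dρ ζ Dm ρhat mhat (ρ, m)
        = (((1 / 2 * Dρ * (ρ - ρhat) ^ 2 + 1 / 2 * ∑ j, Dm j * (m j - mhat j) ^ 2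
            + ζ / 2 * (‖m‖ ^ 2 / ((ρ - α) * (β - ρ))) : ℝ)) : EReal) := by
      simp only [proxObj, phiAction, if_pos hpos, ← EReal.coe_mul, ← EReal.coe_add]
    rw [hRHS, EReal.coe_le_coe_iff, hnorm]
    have hsum : ∑ j, Dm j * (mhat j) ^ 2
        - (ρ - α) * (β - ρ) / ζ * ∑ j, (Dm j * mhat j) ^ 2
        ≤ ∑ j, Dm j * (m j - mhat j) ^ 2
          + ζ / ((ρ - α) * (β - ρ)) * ∑ j, (m j) ^ 2 := by
      have := Finset.sum_le_sum (fun j (_ : j ∈ Finset.univ) =>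
        coord_key (Dm j) ζ ((ρ - α) * (β - ρ)) (mhat j) (m j) (hDm j) hζ hpos)
      simpa [Finset.sum_sub_distrib, Finset.sum_add_distrib, ← Finset.mul_sum] using this
    have heq : ζ / 2 * ((∑ j, (m j) ^ 2) / ((ρ - α) * (β - ρ)))
        = 1 / 2 * (ζ / ((ρ - α) * (β - ρ)) * ∑ j, (m j) ^ 2) := by ring
    have hk := hkey ρ hαρ.1.le hαρ.2.le
    have hms : ∀ j, ((0:ℝ) - mhat j) ^ 2 = (mhat j) ^ 2 := fun j => by ring
    simp only [hms]
    linarith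
  · by_cases hz : (ρ - α) * (β - ρ) = 0 ∧ m = 0
    · obtain ⟨h1, h2⟩ := hz
      subst h2
      have hRHS : proxObj (fun ρ => (ρ - α) * (β - ρ)) Dρ ζ Dm ρhat mhat
          (ρ, (0 : EuclideanSpace ℝ (Fin d)))
          = (((1 / 2 * Dρ * (ρ - ρhat) ^ 2
              + 1 / 2 * ∑ j, Dm j * ((0:ℝ) - mhat j) ^ 2 : ℝ)) : EReal) := by
        simp [proxObj, phiAction, h1]
      rw [hRHS, EReal.coe_le_coe_iff]
      have hbound : α ≤ ρ ∧ ρ ≤ β := by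
        rcases mul_eq_zero.1 h1 with h | h
        · have : ρ = α := by linarith [sub_eq_zero.1 h]
          constructor <;> linarith
        · have : ρ = β := by linarith [sub_eq_zero.1 h]
          constructor <;> linarith
      have hk := hkey ρ hbound.1 hbound.2
      rw [h1] at hk
      simp only [zero_div, zero_mul] at hk
      linarith
    · have hphi : phiAction (fun ρ => (ρ - α) * (β - ρ)) ρ m = ⊤ := by
        simp only [phiAction]
        rw [if_neg hpos, if_neg hz]
      rw [show proxObj (fun ρ => (ρ - α) * (β - ρ)) Dρ ζ Dm ρhat mhat (ρ, m)
          = (⊤ : EReal) by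
        rw [proxObj]
        simp only
        rw [hphi, EReal.coe_mul_top_of_pos (by positivity : (0:ℝ) < ζ / 2),
          EReal.coe_add_top]]
      exact le_top

/-- For M(ρ) = (ρ−α)(β−ρ): if ρ̂ ≤ α − C₂ then L > 0 on (α, ρ_m], L has no root in (α,β),
and the bounded minimizer of the proximal subproblem is ρ* = α; symmetrically, if
ρ̂ ≥ β + C₂ then the bounded minimizer is ρ* = β. -/
theorem quadratic_mobility_boundary_minimizer {d : ℕ} (α β : ℝ) (hαβ : α < β)
    (Dρ ζ : ℝ) (Dm : Fin d → ℝ) (hDρ : 0 < Dρ) (hζ : 0 < ζ) (hDm : ∀ j, 0 < Dm j)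
    (ρhat : ℝ) (mhat : EuclideanSpace ℝ (Fin d))
    (ρm : ℝ) (hρm : ρm = (α + β) / 2)
    (C₂ : ℝ) (hC₂ : C₂ = (β - α) / (2 * ζ * Dρ) * ∑ j, (Dm j * mhat j) ^ 2)
    (L : ℝ → ℝ)
    (hL : ∀ ρ, L ρ = Dρ * (ρ - ρhat)
        - ζ * (α + β - 2 * ρ) / 2
            * ∑ j, (Dm j * mhat j / (Dm j * ((ρ - α) * (β - ρ)) + ζ)) ^ 2) :
    (ρhat ≤ α - C₂ →
      (∀ ρ ∈ Set.Ioc α ρm, 0 < L ρ) ∧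
      (∀ ρ ∈ Set.Ioo α β, L ρ ≠ 0) ∧
      (∀ q, proxObj (fun ρ => (ρ - α) * (β - ρ)) Dρ ζ Dm ρhat mhat
            (α, (0 : EuclideanSpace ℝ (Fin d)))
          ≤ proxObj (fun ρ => (ρ - α) * (β - ρ)) Dρ ζ Dm ρhat mhat q)) ∧
    (β + C₂ ≤ ρhat →
      ∀ q, proxObj (fun ρ => (ρ - α) * (β - ρ)) Dρ ζ Dm ρhat mhat
            (β, (0 : EuclideanSpace ℝ (Fin d)))
          ≤ proxObj (fun ρ => (ρ - α) * (β - ρ)) Dρ ζ Dm ρhat mhat q) := by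
  set S : ℝ := ∑ j, (Dm j * mhat j) ^ 2 with hSdef
  have hS : 0 ≤ S := Finset.sum_nonneg fun j _ => sq_nonneg _
  have hC₂eq : 2 * ζ * Dρ * C₂ = (β - α) * S := by
    rw [hC₂]; field_simp; all_goals ring
  have hC₂0 : 0 ≤ C₂ := by
    rw [hC₂]
    exact mul_nonneg (div_nonneg (by linarith) (by positivity)) hS
  constructor
  · intro hρhat
    have hLpos : ∀ ρ ∈ Set.Ioo α β, 0 < L ρ := by
      rintro ρ ⟨h1, h2⟩
      rw [hL]
      set E : ℝ := ∑ j, (Dm j * mhat j / (Dm j * ((ρ - α) * (β - ρ)) + ζ)) ^ 2 with hEdef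
      have hE0 : 0 ≤ E := Finset.sum_nonneg fun j _ => sq_nonneg _
      have hM0 : 0 ≤ (ρ - α) * (β - ρ) := mul_nonneg (by linarith) (by linarith)
      have hEle : E ≤ S / ζ ^ 2 := by
        rw [hSdef, hEdef, Finset.sum_div]
        apply Finset.sum_le_sum
        intro j _
        rw [div_pow]
        apply div_le_div_of_nonneg_left (sq_nonneg _) (by positivity)
        have h0 : ζ ≤ Dm j * ((ρ - α) * (β - ρ)) + ζ := by
          nlinarith [mul_nonneg (hDm j).le hM0]
        exact pow_le_pow_left₀ hζ.le h0 2
      rcases le_or_gt (α + β - 2 * ρ) 0 with h | h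
      · have hterm : ζ * (α + β - 2 * ρ) / 2 * E ≤ 0 := by
          apply mul_nonpos_of_nonpos_of_nonneg _ hE0
          have : ζ * (α + β - 2 * ρ) ≤ 0 := mul_nonpos_of_nonneg_of_nonpos hζ.le h
          linarith
        have : 0 < Dρ * (ρ - ρhat) := mul_pos hDρ (by linarith)
        linarith
      · have hterm : ζ * (α + β - 2 * ρ) / 2 * E
            ≤ ζ * (α + β - 2 * ρ) / 2 * (S / ζ ^ 2) :=
          mul_le_mul_of_nonneg_left hEle (by positivity)
        have hterm2 : ζ * (α + β - 2 * ρ) / 2 * (S / ζ ^ 2)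
            = (α + β - 2 * ρ) * S / (2 * ζ) := by
          field_simp
        have hmain : (α + β - 2 * ρ) * S / (2 * ζ) < Dρ * (ρ - ρhat) := by
          rw [div_lt_iff₀ (by positivity)]
          nlinarith [mul_pos (mul_pos hζ hDρ) (sub_pos.2 h1),
            mul_nonneg (by linarith : (0:ℝ) ≤ ρ - α) hS,
            mul_nonneg (mul_pos hζ hDρ).le (by linarith : (0:ℝ) ≤ α - C₂ - ρhat)]
        linarith
    refine ⟨?_, ?_, ?_⟩
    · rintro ρ ⟨h1, h2⟩
      exact hLpos ρ ⟨h1, by rw [hρm] at h2; linarith⟩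
    · intro ρ hρ
      exact (hLpos ρ hρ).ne'
    · apply prox_min_at α β hαβ Dρ ζ Dm hζ hDm ρhat mhat α (by ring)
      intro ρ hρ1 hρ2
      rw [← sub_nonneg]
      have heq : Dρ * (ρ - ρhat) ^ 2
          - (Dρ * (α - ρhat) ^ 2 + (ρ - α) * (β - ρ) / ζ * S)
          = (ζ * Dρ * (ρ - ρhat) ^ 2 - ζ * Dρ * (α - ρhat) ^ 2
              - (ρ - α) * (β - ρ) * S) / ζ := by
        field_simp; ring
      rw [heq]
      apply div_nonneg _ hζ.le
      nlinarith [mul_nonneg (mul_nonneg (mul_pos hζ hDρ).le (by linarith : (0:ℝ) ≤ ρ - α))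
          (by linarith : (0:ℝ) ≤ α - C₂ - ρhat),
        mul_nonneg (mul_nonneg (by linarith : (0:ℝ) ≤ ρ - α) (by linarith : (0:ℝ) ≤ ρ - α)) hS,
        mul_nonneg (mul_pos hζ hDρ).le (sq_nonneg (ρ - α)),
        (by rw [hC₂eq] : 2 * ζ * Dρ * C₂ * (ρ - α) = (β - α) * S * (ρ - α))]
  · intro hρhat
    apply prox_min_at α β hαβ Dρ ζ Dm hζ hDm ρhat mhat β (by ring)
    intro ρ hρ1 hρ2
    rw [← sub_nonneg]
    have heq : Dρ * (ρ - ρhat) ^ 2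
        - (Dρ * (β - ρhat) ^ 2 + (ρ - α) * (β - ρ) / ζ * S)
        = (ζ * Dρ * (ρ - ρhat) ^ 2 - ζ * Dρ * (β - ρhat) ^ 2
            - (ρ - α) * (β - ρ) * S) / ζ := by
      field_simp; ring
    rw [heq]
    apply div_nonneg _ hζ.le
    nlinarith [mul_nonneg (mul_nonneg (mul_pos hζ hDρ).le (by linarith : (0:ℝ) ≤ β - ρ))
        (by linarith : (0:ℝ) ≤ ρhat - β - C₂),
      mul_nonneg (mul_nonneg (by linarith : (0:ℝ) ≤ β - ρ) (by linarith : (0:ℝ) ≤ β - ρ)) hS,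
      mul_nonneg (mul_pos hζ hDρ).le (sq_nonneg (β - ρ)),
      (by rw [hC₂eq] : 2 * ζ * Dρ * C₂ * (β - ρ) = (β - α) * S * (β - ρ))]
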